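/- There is an absolute constant c > 0 such that the following holds for every ε ∈ (0,1]. Let k be even, γ ∈ (0,1/2], and let W : [k] → Δ({0,1}^k) be the k-RAPPOR channel with privacy parameter ε. For a distribution p on [k], let W(p)^{⊗n} denote the law of n i.i.d. RAPPOR outputs, each obtained by drawing a sample from p and applying W. Suppose there is a test A : ({0,1}^k)^n → {0,1} such that A outputs 0 with probability at least 2/3 under W(u)^{⊗n} (u the uniform distribution on [k]), and A outputs 1 with probability at least 2/3 under W(p_θ)^{⊗n} for every θ ∈ {−1,+1}^{k/2}, where p_θ is the Paninski perturbation. Then n ≥ c·k^{3/2}/(γ²ε²). -/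

import Mathlib

open Finset

/-- The Paninski perturbation of the uniform distribution on `[k]` (`k` even):
indexing `[k]` by `{0, …, k−1}`, the pair `(2i, 2i+1)` gets masses
`(1 ± 2θ_i γ)/k` according to the sign `θ_i ∈ {−1, +1}`. -/
noncomputable def paninski (k : ℕ) (γ : ℝ) (θ : ℕ → ℝ) (x : Fin k) : ℝ :=
  (1 + (if x.val % 2 = 0 then 1 else -1) * 2 * θ (x.val / 2) * γ) / k

/-- The `k`-RAPPOR channel with privacy parameter `ε`: the probability that input
`x ∈ [k]` produces the bit-vector `b ∈ {0,1}^k` (one-hot encode `x`, then flip every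
bit independently with probability `1/(e^{ε/2}+1)`). -/
noncomputable def rapporChannel (ε : ℝ) {k : ℕ} (x : Fin k) (b : Fin k → Bool) : ℝ :=
  ∏ j : Fin k,
    (if b j
      then (if j = x then Real.exp (ε / 2) / (Real.exp (ε / 2) + 1)
            else 1 / (Real.exp (ε / 2) + 1))
      else (if j = x then 1 / (Real.exp (ε / 2) + 1)
            else Real.exp (ε / 2) / (Real.exp (ε / 2) + 1)))

/-!
Le Cam's method with the chi-square distance, against the uniform mixture of the Paninski
perturbations. With `r = e^{ε/2}`, the law of the RAPPOR output on an input law `p` is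
`C(b) (r⁻¹ + (r - r⁻¹) ∑ₓ p x bₓ)` for a product law `C` on `{0,1}^k`. Hence, for zero-sum
perturbations `δ, δ'` of the uniform law `u`, `∑_b W(u+δ)(b) W(u+δ')(b) / W(u)(b)` equals
`1 + (r - r⁻¹)² J ⟨δ, δ'⟩`: both `C` and `W(u)` are invariant under permutations of the
coordinates, so the coefficient `J ≤ r` does not depend on the coordinates. For the Paninski
family this reads `1 + κ ⟨θ, θ'⟩` with `κ k² = O(ε² γ²)`, and the second moment of the mixture of
the `n`-fold products is `E_{θ,θ'} (1 + κ ⟨θ, θ'⟩)ⁿ ≤ cosh(nκ)^{k/2} ≤ exp(k n² κ² / 4)`.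
A test with error `1/3` forces this to be at least `10/9`, so `k³ = O(n² ε⁴ γ⁴)`.
-/

open Real

namespace RapporLowerBound

section ChiSquare

variable {Ω : Type*} [Fintype Ω]

theorem sq_sum_sub_mul_le_sum_sq_div_sub_one {P M g : Ω → ℝ} (hP : ∀ ω, 0 < P ω)
    (hPsum : ∑ ω, P ω = 1) (hMsum : ∑ ω, M ω = 1) (hg : ∀ ω, g ω ^ 2 ≤ 1) :
    (∑ ω, (M ω - P ω) * g ω) ^ 2 ≤ ∑ ω, M ω ^ 2 / P ω - 1 := by
  have h_cs := sq_sum_div_le_sum_sq_div univ (fun ω => (M ω - P ω) * g ω) fun ω _ => hP ω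
  rw [hPsum, div_one] at h_cs
  calc (∑ ω, (M ω - P ω) * g ω) ^ 2
      ≤ ∑ ω, ((M ω - P ω) * g ω) ^ 2 / P ω := h_cs
    _ ≤ ∑ ω, (M ω - P ω) ^ 2 / P ω := by
      refine sum_le_sum fun ω _ => div_le_div_of_nonneg_right ?_ (hP ω).le
      rw [mul_pow]
      exact mul_le_of_le_one_right (sq_nonneg _) (hg ω)
    _ = ∑ ω, (M ω ^ 2 / P ω - 2 * M ω + P ω) := by
      refine sum_congr rfl fun ω _ => ?_
      field_simp [(hP ω).ne']
      ring
    _ = ∑ ω, M ω ^ 2 / P ω - 1 := by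
      rw [sum_add_distrib, sum_sub_distrib, ← mul_sum, hMsum, hPsum]
      ring

theorem le_sum_sq_div_of_test {P M : Ω → ℝ} (hP : ∀ ω, 0 < P ω) (hPsum : ∑ ω, P ω = 1)
    (hMsum : ∑ ω, M ω = 1) (A : Ω → Bool)
    (hA_P : 2 / 3 ≤ ∑ ω, P ω * (if A ω = false then 1 else 0))
    (hA_M : 2 / 3 ≤ ∑ ω, M ω * (if A ω = true then 1 else 0)) :
    10 / 9 ≤ ∑ ω, M ω ^ 2 / P ω := by
  set g : Ω → ℝ := fun ω => if A ω = true then 1 else 0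
  have hg : ∀ ω, g ω ^ 2 ≤ 1 := fun ω => by simp only [g]; split_ifs <;> norm_num
  have hP_rejects :
      ∑ ω, P ω * g ω = ∑ ω, P ω - ∑ ω, P ω * (if A ω = false then 1 else 0) := by
    rw [← sum_sub_distrib]
    exact sum_congr rfl fun ω _ => by cases h : A ω <;> simp [g, h]
  have h_gap : 1 / 3 ≤ ∑ ω, (M ω - P ω) * g ω := by
    simp only [sub_mul, sum_sub_distrib]
    linarith
  nlinarith [sq_sum_sub_mul_le_sum_sq_div_sub_one hP hPsum hMsum hg]

end ChiSquare

section Mixtures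

variable {V β : Type*} [Fintype V] [Fintype β]

theorem sum_sq_sum_prod_div_prod (Q : V → β → ℝ) (P : β → ℝ) (n : ℕ) :
    ∑ B : Fin n → β, (∑ v, ∏ i, Q v (B i)) ^ 2 / ∏ i, P (B i)
      = ∑ v, ∑ w, (∑ b, Q v b * Q w b / P b) ^ n := by
  have h_expand : ∀ B : Fin n → β, (∑ v, ∏ i, Q v (B i)) ^ 2 / ∏ i, P (B i)
      = ∑ v, ∑ w, ∏ i, (Q v (B i) * Q w (B i) / P (B i)) := fun B => by
    simp_rw [sq, sum_mul_sum, sum_div, prod_div_distrib, prod_mul_distrib]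
  simp_rw [h_expand, Fintype.sum_pow]
  rw [sum_comm]
  exact sum_congr rfl fun v _ => sum_comm

/-- Le Cam's method against the uniform mixture `M` of the `Q v ^ ⊗n`: the right-hand side is
`∑ M² / P ^ ⊗n`. -/
theorem le_sum_sum_pow_of_test [Nonempty V] {P : β → ℝ} {Q : V → β → ℝ}
    (hP : ∀ b, 0 < P b) (hPsum : ∑ b, P b = 1) (hQsum : ∀ v, ∑ b, Q v b = 1)
    {n : ℕ} (A : (Fin n → β) → Bool)
    (hA_P : 2 / 3 ≤ ∑ B : Fin n → β, (∏ i, P (B i)) * (if A B = false then 1 else 0))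
    (hA_Q : ∀ v, 2 / 3 ≤ ∑ B : Fin n → β, (∏ i, Q v (B i)) * (if A B = true then 1 else 0)) :
    10 / 9 ≤ (∑ v, ∑ w, (∑ b, Q v b * Q w b / P b) ^ n) / (Fintype.card V : ℝ) ^ 2 := by
  have hN : (0 : ℝ) < Fintype.card V := by exact_mod_cast Fintype.card_pos
  have h_test := le_sum_sq_div_of_test (M := fun B => (∑ v, ∏ i, Q v (B i)) / Fintype.card V)
    (fun B => prod_pos fun i _ => hP (B i)) (by rw [← Fintype.sum_pow, hPsum, one_pow])
    (by simp_rw [← sum_div]; rw [sum_comm]; simp [← Fintype.sum_pow, hQsum, hN.ne'])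
    A hA_P ?_
  · rw [← sum_sq_sum_prod_div_prod, sum_div]
    exact h_test.trans_eq (sum_congr rfl fun B _ => by rw [div_pow, div_right_comm])
  · simp_rw [div_mul_eq_mul_div, ← sum_div, sum_mul]
    rw [sum_comm, le_div_iff₀ hN]
    have h_each := sum_le_sum fun v (_ : v ∈ univ) => hA_Q v
    rw [sum_const, card_univ, nsmul_eq_mul] at h_each
    linarith

end Mixtures

section SignVectors

variable {m : ℕ}

noncomputable def signSeq (v : Fin m → Bool) (i : ℕ) : ℝ :=
  if h : i < m then (if v ⟨i, h⟩ then 1 else -1) else 1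

theorem signSeq_eq_one_or_neg_one (v : Fin m → Bool) (i : ℕ) :
    signSeq v i = 1 ∨ signSeq v i = -1 := by
  unfold signSeq
  split_ifs <;> simp

theorem sum_exp_mul_sum_signSeq (t : ℝ) (v : Fin m → Bool) :
    ∑ w : Fin m → Bool, exp (t * ∑ i ∈ range m, signSeq v i * signSeq w i)
      = (2 * cosh t) ^ m := by
  have h_factor : ∀ w : Fin m → Bool, exp (t * ∑ i ∈ range m, signSeq v i * signSeq w i)
      = ∏ i : Fin m, exp (t * signSeq v i * if w i then 1 else -1) := fun w => by
    rw [← Fin.sum_univ_eq_sum_range, mul_sum, exp_sum]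
    simp [signSeq]
  simp_rw [h_factor]
  rw [← Fintype.prod_sum fun (i : Fin m) (s : Bool) => exp (t * signSeq v i * if s then 1 else -1),
    ← Fin.prod_const]
  refine prod_congr rfl fun i _ => ?_
  rw [Fintype.sum_bool, cosh_eq]
  cases h : v i <;> simp [signSeq, h, add_comm, mul_div_cancel₀]

theorem sum_sum_pow_le_exp {n : ℕ} {κ : ℝ}
    (h_nonneg : ∀ v w : Fin m → Bool, 0 ≤ 1 + κ * ∑ i ∈ range m, signSeq v i * signSeq w i) :
    (∑ v : Fin m → Bool, ∑ w : Fin m → Bool,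
        (1 + κ * ∑ i ∈ range m, signSeq v i * signSeq w i) ^ n) / ((2 : ℝ) ^ m) ^ 2
      ≤ exp (m * (n * κ) ^ 2 / 2) := by
  calc _ ≤ (∑ v : Fin m → Bool, ∑ w : Fin m → Bool,
          exp (n * κ * ∑ i ∈ range m, signSeq v i * signSeq w i)) / ((2 : ℝ) ^ m) ^ 2 := by
        gcongr with v _ w _
        set x := κ * ∑ i ∈ range m, signSeq v i * signSeq w i
        calc (1 + x) ^ n ≤ exp x ^ n :=
              pow_le_pow_left₀ (h_nonneg v w) (by linarith [add_one_le_exp x]) n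
          _ = _ := by rw [← exp_nat_mul, mul_assoc]
    _ = cosh (n * κ) ^ m := by
        simp only [sum_exp_mul_sum_signSeq, sum_const, card_univ, Fintype.card_fun,
          Fintype.card_bool, Fintype.card_fin, nsmul_eq_mul]
        push_cast
        field_simp
        ring
    _ ≤ exp ((n * κ) ^ 2 / 2) ^ m := pow_le_pow_left₀ (cosh_pos _).le (cosh_le_exp_half_sq _) m
    _ = exp (m * (n * κ) ^ 2 / 2) := by rw [← exp_nat_mul, mul_div_assoc]

end SignVectors

section SymmetricFunctions

variable {α : Type*}

noncomputable def bit (b : α → Bool) (x : α) : ℝ := if b x then 1 else 0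

theorem bit_mul_self (b : α → Bool) (x : α) : bit b x * bit b x = bit b x := by
  unfold bit; split_ifs <;> norm_num

theorem bit_nonneg (b : α → Bool) (x : α) : 0 ≤ bit b x := by
  unfold bit; split_ifs <;> norm_num

theorem bit_mul_one_sub_bit_mem (b : α → Bool) (x y : α) :
    0 ≤ bit b x * (1 - bit b y) ∧ bit b x * (1 - bit b y) ≤ 1 := by
  unfold bit; split_ifs <;> norm_num

theorem bit_comp (b : α → Bool) (σ : Equiv.Perm α) (x : α) : bit (b ∘ σ) x = bit b (σ x) := rfl

def IsPermInvariant (F : (α → Bool) → ℝ) : Prop :=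
  ∀ (σ : Equiv.Perm α) (b : α → Bool), F (b ∘ σ) = F b

variable [DecidableEq α]

theorem exists_perm_apply_eq_and_apply_eq {x y x' y' : α} (h : x ≠ y) (h' : x' ≠ y') :
    ∃ σ : Equiv.Perm α, σ x' = x ∧ σ y' = y := by
  set y'' := Equiv.swap x' x y'
  have hy'' : x ≠ y'' := fun hx => h' ((Equiv.swap x' x).injective (by simp [y'', ← hx]))
  refine ⟨(Equiv.swap x' x).trans (Equiv.swap y'' y), ?_, ?_⟩
  · simp [Equiv.swap_apply_of_ne_of_ne hy'' h]
  · simp [y'']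

variable [Fintype α] {F : (α → Bool) → ℝ}

theorem sum_mul_comp_perm (hF : IsPermInvariant F) (σ : Equiv.Perm α) (G : (α → Bool) → ℝ) :
    ∑ b, F b * G (b ∘ σ) = ∑ b, F b * G b := by
  calc ∑ b, F b * G (b ∘ σ) = ∑ b, F (b ∘ σ) * G (b ∘ σ) := by simp only [hF σ]
    _ = ∑ b, F b * G b :=
      Equiv.sum_comp (σ.symm.arrowCongr (Equiv.refl Bool)) fun b => F b * G b

theorem sum_mul_bit_eq (hF : IsPermInvariant F) (x y : α) :
    ∑ b, F b * bit b x = ∑ b, F b * bit b y := by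
  simpa [bit_comp] using sum_mul_comp_perm hF (Equiv.swap x y) fun b => bit b y

theorem sum_mul_bit_mul_bit_eq (hF : IsPermInvariant F) {x y x' y' : α} (h : x ≠ y)
    (h' : x' ≠ y') :
    ∑ b, F b * (bit b x * bit b y) = ∑ b, F b * (bit b x' * bit b y') := by
  obtain ⟨σ, hx, hy⟩ := exists_perm_apply_eq_and_apply_eq h h'
  simpa [bit_comp, hx, hy] using sum_mul_comp_perm hF σ fun b => bit b x' * bit b y'

theorem sum_mul_sum_mul_bit_eq_zero (hF : IsPermInvariant F) {δ : α → ℝ} (hδ : ∑ x, δ x = 0) :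
    ∑ b, F b * ∑ x, δ x * bit b x = 0 := by
  rcases isEmpty_or_nonempty α with hα | ⟨⟨x₀⟩⟩
  · simp
  simp_rw [mul_sum]
  rw [sum_comm]
  simp_rw [mul_left_comm (F _), ← mul_sum, sum_mul_bit_eq hF _ x₀, ← sum_mul, hδ, zero_mul]

/-- By invariance, `∑ F b * (bit b x * bit b y)` takes one value on the diagonal `x = y` and
another off it. -/
theorem sum_mul_sum_mul_bit_mul_sum_mul_bit (hF : IsPermInvariant F) {x₀ y₀ : α}
    (hxy : x₀ ≠ y₀) (δ δ' : α → ℝ) (hδ' : ∑ x, δ' x = 0) :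
    ∑ b, F b * ((∑ x, δ x * bit b x) * ∑ y, δ' y * bit b y)
      = (∑ b, F b * (bit b x₀ * (1 - bit b y₀))) * ∑ x, δ x * δ' x := by
  set J := ∑ b, F b * (bit b x₀ * (1 - bit b y₀))
  set J_off := ∑ b, F b * (bit b x₀ * bit b y₀)
  have h_pair : ∀ x y, ∑ b, F b * (bit b x * bit b y) = J_off + if x = y then J else 0 := by
    intro x y
    split_ifs with hxy'
    · subst hxy'
      simp only [J, J_off, bit_mul_self, mul_sub, mul_one, sum_sub_distrib,
        sum_mul_bit_eq hF x x₀]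
      ring
    · rw [sum_mul_bit_mul_bit_eq hF hxy' hxy, add_zero]
  calc ∑ b, F b * ((∑ x, δ x * bit b x) * ∑ y, δ' y * bit b y)
      = ∑ x, δ x * ∑ y, δ' y * ∑ b, F b * (bit b x * bit b y) := by
        simp_rw [sum_mul_sum, mul_sum]
        rw [sum_comm]
        refine sum_congr rfl fun x _ => ?_
        rw [sum_comm]
        exact sum_congr rfl fun y _ => sum_congr rfl fun b _ => by ring
    _ = J * ∑ x, δ x * δ' x := by
        simp_rw [h_pair, mul_add, sum_add_distrib, ← sum_mul, hδ', zero_mul, zero_add,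
          mul_ite, mul_zero, sum_ite_eq, mem_univ, if_true]
        rw [mul_sum]
        exact sum_congr rfl fun x _ => by ring

end SymmetricFunctions

section ExpBounds

variable {ε : ℝ}

theorem exp_half_sub_inv_nonneg (hε : 0 ≤ ε) : 0 ≤ exp (ε / 2) - (exp (ε / 2))⁻¹ :=
  sub_nonneg.2 ((inv_le_one_of_one_le₀ (one_le_exp (by linarith))).trans
    (one_le_exp (by linarith)))

theorem exp_half_le_two (hε : ε ≤ 1) : exp (ε / 2) ≤ 2 := by
  have h := abs_exp_sub_one_le (x := 1 / 2) (by norm_num [abs_of_pos])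
  calc exp (ε / 2) ≤ exp (1 / 2) := exp_le_exp.2 (by linarith)
    _ ≤ 2 := by linarith [le_abs_self (exp (1 / 2) - 1), abs_of_pos (by norm_num : (0 : ℝ) < 1 / 2)]

theorem exp_half_sub_inv_le (hε0 : 0 ≤ ε) (hε1 : ε ≤ 1) :
    exp (ε / 2) - (exp (ε / 2))⁻¹ ≤ 2 * ε := by
  have h_exp : exp ε - 1 ≤ 2 * ε := by
    have := abs_exp_sub_one_le (x := ε) (by rw [abs_le]; constructor <;> linarith)
    rw [abs_of_nonneg hε0] at this
    linarith [le_abs_self (exp ε - 1)]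
  have h_sq : exp (ε / 2) ^ 2 = exp ε := by rw [← exp_nat_mul]; ring_nf
  have h_one : 1 ≤ exp (ε / 2) := one_le_exp (by linarith)
  have h_inv : exp (ε / 2) * (exp (ε / 2))⁻¹ = 1 := mul_inv_cancel₀ (exp_pos _).ne'
  -- `r - r⁻¹ = r⁻¹ (r² - 1) ≤ r² - 1 = e^ε - 1`
  nlinarith [mul_nonneg (sub_nonneg.2 h_one) (exp_half_sub_inv_nonneg hε0)]

end ExpBounds

section Rappor

variable {k : ℕ} {ε : ℝ}

noncomputable def rapporLaw (ε : ℝ) (p : Fin k → ℝ) (b : Fin k → Bool) : ℝ :=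
  ∑ x, p x * rapporChannel ε x b

/-- The output law of RAPPOR on an input outside `[k]`: every bit is `1` with probability
`1 / (r + 1)`, where `r = e^{ε/2}`. -/
noncomputable def rapporWeight (r : ℝ) (b : Fin k → Bool) : ℝ :=
  ∏ j, if b j then 1 / (r + 1) else r / (r + 1)

/-- The likelihood ratio `rapporLaw ε p / rapporWeight (e^{ε/2})`; it is linear in `p`. -/
noncomputable def rapporRatio (ε : ℝ) (p : Fin k → ℝ) (b : Fin k → Bool) : ℝ :=
  (exp (ε / 2))⁻¹ * ∑ x, p x + (exp (ε / 2) - (exp (ε / 2))⁻¹) * ∑ x, p x * bit b x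

theorem sum_one_div_natCast (hk : 0 < k) : ∑ _x : Fin k, 1 / (k : ℝ) = 1 := by
  simp [hk.ne']

theorem rapporWeight_pos {r : ℝ} (hr : 0 < r) (b : Fin k → Bool) : 0 < rapporWeight r b :=
  prod_pos fun j _ => by split_ifs <;> positivity

theorem sum_rapporWeight {r : ℝ} (hr : r + 1 ≠ 0) :
    ∑ b : Fin k → Bool, rapporWeight r b = 1 := by
  unfold rapporWeight
  rw [← Fintype.prod_sum fun (_ : Fin k) (s : Bool) => if s then 1 / (r + 1) else r / (r + 1)]
  refine prod_eq_one fun j _ => ?_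
  simp only [Fintype.sum_bool, if_true, Bool.false_eq_true, if_false]
  rw [← add_div, add_comm 1 r, div_self hr]

theorem rapporWeight_isPermInvariant (r : ℝ) : IsPermInvariant (rapporWeight (k := k) r) :=
  fun σ b => Equiv.prod_comp σ fun j => if b j then 1 / (r + 1) else r / (r + 1)

theorem rapporChannel_pos (ε : ℝ) (x : Fin k) (b : Fin k → Bool) : 0 < rapporChannel ε x b :=
  prod_pos fun j _ => by split_ifs <;> positivity

theorem sum_rapporChannel (ε : ℝ) (x : Fin k) : ∑ b, rapporChannel ε x b = 1 := by
  unfold rapporChannel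
  rw [← Fintype.prod_sum fun (j : Fin k) (s : Bool) => if s
      then (if j = x then exp (ε / 2) / (exp (ε / 2) + 1) else 1 / (exp (ε / 2) + 1))
      else (if j = x then 1 / (exp (ε / 2) + 1) else exp (ε / 2) / (exp (ε / 2) + 1))]
  refine prod_eq_one fun j _ => ?_
  have := exp_pos (ε / 2)
  by_cases hj : j = x <;> simp [hj, add_comm] <;> field_simp <;> ring

theorem rapporChannel_eq (ε : ℝ) (x : Fin k) (b : Fin k → Bool) :
    rapporChannel ε x b = rapporWeight (exp (ε / 2)) b
      * ((exp (ε / 2))⁻¹ + (exp (ε / 2) - (exp (ε / 2))⁻¹) * bit b x) := by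
  have h_x : (exp (ε / 2))⁻¹ + (exp (ε / 2) - (exp (ε / 2))⁻¹) * bit b x
      = ∏ j, if j = x then (if b x then exp (ε / 2) else (exp (ε / 2))⁻¹) else 1 := by
    rw [prod_ite_eq', if_pos (mem_univ x)]
    unfold bit
    split_ifs <;> ring
  rw [h_x, rapporWeight, ← prod_mul_distrib]
  refine prod_congr rfl fun j _ => ?_
  have := exp_pos (ε / 2)
  by_cases hj : j = x
  · subst hj
    cases b j <;> simp <;> field_simp
  · simp [hj]

theorem rapporLaw_eq (ε : ℝ) (p : Fin k → ℝ) (b : Fin k → Bool) :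
    rapporLaw ε p b = rapporWeight (exp (ε / 2)) b * rapporRatio ε p b := by
  simp only [rapporLaw, rapporRatio, rapporChannel_eq, mul_sum, ← sum_add_distrib]
  exact sum_congr rfl fun x _ => by ring

theorem sum_rapporLaw (ε : ℝ) (p : Fin k → ℝ) : ∑ b, rapporLaw ε p b = ∑ x, p x := by
  simp_rw [rapporLaw]
  rw [sum_comm]
  simp [← mul_sum, sum_rapporChannel]

theorem rapporLaw_pos (hk : 0 < k) {p : Fin k → ℝ} (hp : ∀ x, 0 < p x) (b : Fin k → Bool) :
    0 < rapporLaw ε p b :=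
  sum_pos (fun x _ => mul_pos (hp x) (rapporChannel_pos ε x b)) ⟨⟨0, hk⟩, mem_univ _⟩

theorem rapporLaw_nonneg {p : Fin k → ℝ} (hp : ∀ x, 0 ≤ p x) (b : Fin k → Bool) :
    0 ≤ rapporLaw ε p b :=
  sum_nonneg fun x _ => mul_nonneg (hp x) (rapporChannel_pos ε x b).le

theorem rapporRatio_add (ε : ℝ) (p q : Fin k → ℝ) (b : Fin k → Bool) :
    rapporRatio ε (p + q) b = rapporRatio ε p b + rapporRatio ε q b := by
  simp only [rapporRatio, Pi.add_apply, add_mul, sum_add_distrib]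
  ring

theorem rapporRatio_of_sum_eq_zero (ε : ℝ) {δ : Fin k → ℝ} (hδ : ∑ x, δ x = 0)
    (b : Fin k → Bool) :
    rapporRatio ε δ b = (exp (ε / 2) - (exp (ε / 2))⁻¹) * ∑ x, δ x * bit b x := by
  simp [rapporRatio, hδ]

theorem inv_le_rapporRatio (hε : 0 ≤ ε) {p : Fin k → ℝ} (hp : ∀ x, 0 ≤ p x)
    (hp_sum : ∑ x, p x = 1) (b : Fin k → Bool) : (exp (ε / 2))⁻¹ ≤ rapporRatio ε p b := by
  have h_bits : 0 ≤ ∑ x, p x * bit b x := sum_nonneg fun x _ => mul_nonneg (hp x) (bit_nonneg b x)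
  rw [rapporRatio, hp_sum, mul_one]
  nlinarith [exp_half_sub_inv_nonneg hε]

theorem rapporRatio_const_isPermInvariant (ε c : ℝ) :
    IsPermInvariant (rapporRatio (k := k) ε fun _ => c) := fun σ b => by
  simp only [rapporRatio, bit_comp]
  congr 2
  exact Equiv.sum_comp σ fun x => c * bit b x

end Rappor

section SecondMoment

variable {k : ℕ} {ε : ℝ}

noncomputable def rapporMomentCoeff (ε : ℝ) (x₀ y₀ : Fin k) : ℝ :=
  ∑ b, rapporWeight (exp (ε / 2)) b / rapporRatio ε (fun _ => 1 / (k : ℝ)) b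
    * (bit b x₀ * (1 - bit b y₀))

theorem inv_le_rapporRatio_uniform (hε : 0 ≤ ε) (hk : 0 < k) (b : Fin k → Bool) :
    (exp (ε / 2))⁻¹ ≤ rapporRatio ε (fun _ => 1 / (k : ℝ)) b :=
  inv_le_rapporRatio hε (fun _ => by positivity) (sum_one_div_natCast hk) b

theorem rapporRatio_uniform_pos (hε : 0 ≤ ε) (hk : 0 < k) (b : Fin k → Bool) :
    0 < rapporRatio ε (fun _ => 1 / (k : ℝ)) b :=
  (inv_pos.2 (exp_pos _)).trans_le (inv_le_rapporRatio_uniform hε hk b)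

theorem rapporMomentCoeff_nonneg (hε : 0 ≤ ε) (hk : 0 < k) (x₀ y₀ : Fin k) :
    0 ≤ rapporMomentCoeff ε x₀ y₀ :=
  sum_nonneg fun b _ => mul_nonneg
    (div_pos (rapporWeight_pos (exp_pos _) b) (rapporRatio_uniform_pos hε hk b)).le
    (bit_mul_one_sub_bit_mem b x₀ y₀).1

theorem rapporMomentCoeff_le (hε : 0 ≤ ε) (hk : 0 < k) (x₀ y₀ : Fin k) :
    rapporMomentCoeff ε x₀ y₀ ≤ exp (ε / 2) := by
  have h_term : ∀ b, rapporWeight (exp (ε / 2)) b / rapporRatio ε (fun _ => 1 / (k : ℝ)) b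
      * (bit b x₀ * (1 - bit b y₀)) ≤ rapporWeight (exp (ε / 2)) b * exp (ε / 2) := fun b => by
    have hC := rapporWeight_pos (exp_pos (ε / 2)) b
    calc _ ≤ rapporWeight (exp (ε / 2)) b / rapporRatio ε (fun _ => 1 / (k : ℝ)) b :=
          mul_le_of_le_one_right (div_pos hC (rapporRatio_uniform_pos hε hk b)).le
            (bit_mul_one_sub_bit_mem b x₀ y₀).2
      _ ≤ rapporWeight (exp (ε / 2)) b / (exp (ε / 2))⁻¹ :=
          div_le_div_of_nonneg_left hC.le (inv_pos.2 (exp_pos _))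
            (inv_le_rapporRatio_uniform hε hk b)
      _ = _ := div_inv_eq_mul _ _
  calc _ ≤ ∑ b, rapporWeight (exp (ε / 2)) b * exp (ε / 2) := sum_le_sum fun b _ => h_term b
    _ = exp (ε / 2) := by rw [← sum_mul, sum_rapporWeight (by positivity), one_mul]

theorem sum_rapporLaw_mul_rapporLaw_div (hε : 0 ≤ ε) (hk : 0 < k) {x₀ y₀ : Fin k}
    (hxy : x₀ ≠ y₀) {δ δ' : Fin k → ℝ} (hδ : ∑ x, δ x = 0) (hδ' : ∑ x, δ' x = 0) :
    ∑ b, rapporLaw ε ((fun _ => 1 / (k : ℝ)) + δ) b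
        * rapporLaw ε ((fun _ => 1 / (k : ℝ)) + δ') b / rapporLaw ε (fun _ => 1 / (k : ℝ)) b
      = 1 + (exp (ε / 2) - (exp (ε / 2))⁻¹) ^ 2 * rapporMomentCoeff ε x₀ y₀
          * ∑ x, δ x * δ' x := by
  set u : Fin k → ℝ := fun _ => 1 / (k : ℝ)
  set C : (Fin k → Bool) → ℝ := rapporWeight (exp (ε / 2)) with hC_def
  set D := rapporRatio ε u with hD_def
  set a := exp (ε / 2) - (exp (ε / 2))⁻¹ with ha_def
  have hC : IsPermInvariant C := rapporWeight_isPermInvariant _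
  have hCD : IsPermInvariant fun b => C b / D b := fun σ b =>
    congrArg₂ (· / ·) (hC σ b) (rapporRatio_const_isPermInvariant ε _ σ b)
  have h_term : ∀ b, rapporLaw ε (u + δ) b * rapporLaw ε (u + δ') b / rapporLaw ε u b
      = C b * D b + a * (C b * ∑ x, δ x * bit b x) + a * (C b * ∑ x, δ' x * bit b x)
        + a ^ 2 * (C b / D b * ((∑ x, δ x * bit b x) * ∑ x, δ' x * bit b x)) := fun b => by
    rw [rapporLaw_eq, rapporLaw_eq, rapporLaw_eq, rapporRatio_add, rapporRatio_add,
      rapporRatio_of_sum_eq_zero ε hδ, rapporRatio_of_sum_eq_zero ε hδ', ← hC_def, ← hD_def,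
      ← ha_def]
    have hC0 : C b ≠ 0 := (rapporWeight_pos (exp_pos _) b).ne'
    have hD0 : D b ≠ 0 := (rapporRatio_uniform_pos hε hk b).ne'
    field_simp
    ring
  simp only [h_term, sum_add_distrib, ← mul_sum, sum_mul_sum_mul_bit_eq_zero hC hδ,
    sum_mul_sum_mul_bit_eq_zero hC hδ', sum_mul_sum_mul_bit_mul_sum_mul_bit hCD hxy δ δ' hδ']
  simp only [C, D, ← rapporLaw_eq, sum_rapporLaw, u, sum_one_div_natCast hk, rapporMomentCoeff]
  ring

end SecondMoment

section Paninski

variable {k : ℕ}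

noncomputable def paninskiSign (θ : ℕ → ℝ) (x : Fin k) : ℝ :=
  (if x.val % 2 = 0 then 1 else -1) * θ (x.val / 2)

theorem paninski_eq_add (γ : ℝ) (θ : ℕ → ℝ) :
    paninski k γ θ = (fun _ => 1 / (k : ℝ)) + fun x => 2 * γ / k * paninskiSign θ x := by
  funext x
  simp only [paninski, paninskiSign, Pi.add_apply]
  ring

theorem paninski_nonneg {γ : ℝ} (hγ0 : 0 ≤ γ) (hγ1 : γ ≤ 1 / 2) {θ : ℕ → ℝ}
    (hθ : ∀ i, θ i = 1 ∨ θ i = -1) (x : Fin k) : 0 ≤ paninski k γ θ x := by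
  unfold paninski
  apply div_nonneg _ (Nat.cast_nonneg k)
  rcases hθ (x.val / 2) with h | h <;> rw [h] <;> split_ifs <;> linarith

theorem sum_range_two_mul (m : ℕ) (f : ℕ → ℝ) :
    ∑ j ∈ range (2 * m), f j = ∑ i ∈ range m, (f (2 * i) + f (2 * i + 1)) := by
  induction m with
  | zero => simp
  | succ m ih => rw [mul_add_one, sum_range_succ, sum_range_succ, sum_range_succ, ih]; ring

theorem sum_fin_of_even (hk : k % 2 = 0) (f : ℕ → ℝ) :
    ∑ x : Fin k, f x = ∑ i ∈ range (k / 2), (f (2 * i) + f (2 * i + 1)) := by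
  rw [Fin.sum_univ_eq_sum_range f, ← sum_range_two_mul, Nat.mul_div_cancel' (by omega)]

theorem sum_paninskiSign (hk : k % 2 = 0) (θ : ℕ → ℝ) : ∑ x : Fin k, paninskiSign θ x = 0 := by
  refine (sum_fin_of_even hk fun j => (if j % 2 = 0 then 1 else -1) * θ (j / 2)).trans ?_
  refine sum_eq_zero fun i _ => ?_
  simp [Nat.mul_add_div]

theorem sum_paninskiSign_mul (hk : k % 2 = 0) (θ θ' : ℕ → ℝ) :
    ∑ x : Fin k, paninskiSign θ x * paninskiSign θ' x = 2 * ∑ i ∈ range (k / 2), θ i * θ' i := by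
  refine (sum_fin_of_even hk fun j => (if j % 2 = 0 then 1 else -1) * θ (j / 2)
    * ((if j % 2 = 0 then 1 else -1) * θ' (j / 2))).trans ?_
  rw [mul_sum]
  refine sum_congr rfl fun i _ => ?_
  simp [Nat.mul_add_div]
  ring

theorem sum_paninski (hk : k % 2 = 0) (hk0 : 0 < k) (γ : ℝ) (θ : ℕ → ℝ) :
    ∑ x, paninski k γ θ x = 1 := by
  simp [paninski_eq_add, sum_add_distrib, ← mul_sum, sum_paninskiSign hk]
  field_simp

end Paninski

theorem exists_sum_rapporLaw_paninski {k : ℕ} {ε : ℝ} (hk : k % 2 = 0) (hk0 : 0 < k)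
    (hε0 : 0 ≤ ε) (hε1 : ε ≤ 1) (γ : ℝ) :
    ∃ κ, 0 ≤ κ ∧ κ * k ^ 2 ≤ 64 * ε ^ 2 * γ ^ 2 ∧ ∀ θ θ' : ℕ → ℝ,
      ∑ b, rapporLaw ε (paninski k γ θ) b * rapporLaw ε (paninski k γ θ') b
          / rapporLaw ε (fun _ => 1 / (k : ℝ)) b
        = 1 + κ * ∑ i ∈ range (k / 2), θ i * θ' i := by
  set x₀ : Fin k := ⟨0, hk0⟩
  set y₀ : Fin k := ⟨1, by omega⟩
  have hxy : x₀ ≠ y₀ := by simp [x₀, y₀, Fin.ext_iff]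
  set a := exp (ε / 2) - (exp (ε / 2))⁻¹
  set J := rapporMomentCoeff ε x₀ y₀
  have ha0 : 0 ≤ a := exp_half_sub_inv_nonneg hε0
  have ha : a ≤ 2 * ε := exp_half_sub_inv_le hε0 hε1
  have hJ0 : 0 ≤ J := rapporMomentCoeff_nonneg hε0 hk0 x₀ y₀
  have hJ2 : J ≤ 2 := (rapporMomentCoeff_le hε0 hk0 x₀ y₀).trans (exp_half_le_two hε1)
  have hk_pos : (0 : ℝ) < k := by exact_mod_cast hk0
  refine ⟨a ^ 2 * J * (2 * γ / k) ^ 2 * 2, by positivity, ?_, fun θ θ' => ?_⟩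
  · have h_eq : a ^ 2 * J * (2 * γ / k) ^ 2 * 2 * k ^ 2 = 8 * γ ^ 2 * (a ^ 2 * J) := by
      field_simp
      ring
    have h_a2 : a ^ 2 ≤ (2 * ε) ^ 2 := pow_le_pow_left₀ ha0 ha 2
    rw [h_eq]
    nlinarith [mul_le_mul h_a2 hJ2 hJ0 (sq_nonneg _), sq_nonneg γ]
  · have h_zero : ∀ θ : ℕ → ℝ, ∑ x : Fin k, 2 * γ / k * paninskiSign θ x = 0 := fun θ => by
      rw [← mul_sum, sum_paninskiSign hk, mul_zero]
    simp only [paninski_eq_add]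
    rw [sum_rapporLaw_mul_rapporLaw_div hε0 hk0 hxy (h_zero θ) (h_zero θ')]
    simp_rw [mul_mul_mul_comm (2 * γ / k), ← mul_sum, sum_paninskiSign_mul hk]
    ring

theorem le_natCast_of_ten_ninths_le_exp {k m n : ℕ} {ε γ κ : ℝ} (hk : 0 < k) (hm : 2 * m = k)
    (hε : 0 < ε) (hγ : 0 < γ) (hκ0 : 0 ≤ κ) (hκ : κ * k ^ 2 ≤ 64 * ε ^ 2 * γ ^ 2)
    (h : 10 / 9 ≤ exp (m * (n * κ) ^ 2 / 2)) :
    1 / 128 * (k : ℝ) ^ ((3 : ℝ) / 2) / (γ ^ 2 * ε ^ 2) ≤ n := by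
  have h_tenth : exp (1 / 10) ≤ 10 / 9 := by
    have := add_one_le_exp (-(1 / 10 : ℝ))
    rw [exp_neg] at this
    rw [← inv_inv (exp _), inv_le_comm₀ (inv_pos.2 (exp_pos _)) (by norm_num)]
    linarith
  have h_m : 1 / 10 ≤ m * (n * κ) ^ 2 / 2 := exp_le_exp.1 (h_tenth.trans h)
  have hk_pos : (0 : ℝ) < k := by exact_mod_cast hk
  have hm_real : (m : ℝ) = k / 2 := by rw [← hm]; push_cast; ring
  rw [hm_real] at h_m
  have hκk0 : 0 ≤ κ * k ^ 2 := by positivity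
  -- multiply `2/5 ≤ k (nκ)²` by `k⁴` and use `κ k² ≤ 64 ε² γ²`
  have h_cube : (k : ℝ) ^ 3 ≤ (128 * n * (γ ^ 2 * ε ^ 2)) ^ 2 := by
    have h1 : 2 / 5 * (k : ℝ) ^ 4 ≤ k * n ^ 2 * (κ * k ^ 2) ^ 2 := by nlinarith [pow_pos hk_pos 4]
    have h2 : (κ * k ^ 2) ^ 2 ≤ (64 * ε ^ 2 * γ ^ 2) ^ 2 := pow_le_pow_left₀ hκk0 hκ 2
    have h3 := mul_le_mul_of_nonneg_left h2 (by positivity : (0 : ℝ) ≤ k * n ^ 2)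
    nlinarith [pow_pos hk_pos 3]
  have h_rpow : ((k : ℝ) ^ ((3 : ℝ) / 2)) ^ 2 = (k : ℝ) ^ 3 := by
    rw [← rpow_natCast, ← rpow_mul hk_pos.le]
    norm_num
  have h_root := le_of_pow_le_pow_left₀ two_ne_zero (by positivity) (h_rpow ▸ h_cube)
  rw [div_le_iff₀ (by positivity)]
  linarith

end RapporLowerBound

open RapporLowerBound in
/-- Sample complexity lower bound for uniformity testing using RAPPOR: for
`ε ∈ (0,1]`, any test based on `n` i.i.d. `k`-RAPPOR outputs that distinguishes the
uniform distribution from all Paninski perturbations `p_θ` (each `γ`-far from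
uniform), with error probability at most `1/3` on both sides, must use
`n = Ω(k^{3/2}/(γ²ε²))` samples. -/
theorem rappor_uniformity_testing_lower_bound :
    ∃ c : ℝ, 0 < c ∧
      ∀ (ε : ℝ), 0 < ε → ε ≤ 1 →
      ∀ (k : ℕ), k % 2 = 0 →
      ∀ (γ : ℝ), 0 < γ → γ ≤ 1 / 2 →
      ∀ (n : ℕ) (A : (Fin n → Fin k → Bool) → Bool),
        (2 / 3 ≤ ∑ B : Fin n → Fin k → Bool,
            (∏ i, ∑ x : Fin k, (1 / (k : ℝ)) * rapporChannel ε x (B i)) *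
              (if A B = false then 1 else 0)) →
        (∀ θ : ℕ → ℝ, (∀ i, θ i = 1 ∨ θ i = -1) →
          2 / 3 ≤ ∑ B : Fin n → Fin k → Bool,
            (∏ i, ∑ x : Fin k, paninski k γ θ x * rapporChannel ε x (B i)) *
              (if A B = true then 1 else 0)) →
        c * (k : ℝ) ^ ((3 : ℝ) / 2) / (γ ^ 2 * ε ^ 2) ≤ (n : ℝ) := by
  refine ⟨1 / 128, by norm_num, fun ε hε0 hε1 k hk γ hγ0 hγ1 n A h_unif h_pan => ?_⟩
  obtain rfl | hk0 := Nat.eq_zero_or_pos k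
  · simp
  have h_unif_pos : ∀ b, 0 < rapporLaw ε (fun _ => 1 / (k : ℝ)) b :=
    rapporLaw_pos hk0 fun _ => by positivity
  obtain ⟨κ, hκ0, hκ, h_moment⟩ := exists_sum_rapporLaw_paninski hk hk0 hε0.le hε1 γ
  have h_test := le_sum_sum_pow_of_test (V := Fin (k / 2) → Bool)
    (Q := fun v => rapporLaw ε (paninski k γ (signSeq v))) h_unif_pos
    (by rw [sum_rapporLaw, sum_one_div_natCast hk0])
    (fun v => by rw [sum_rapporLaw, sum_paninski hk hk0])
    A h_unif fun v => h_pan _ (signSeq_eq_one_or_neg_one v)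
  have h_pan_nonneg (v : Fin (k / 2) → Bool) (b) :
      0 ≤ rapporLaw ε (paninski k γ (signSeq v)) b :=
    rapporLaw_nonneg (paninski_nonneg hγ0.le hγ1 (signSeq_eq_one_or_neg_one v)) b
  have h_nonneg : ∀ v w : Fin (k / 2) → Bool,
      0 ≤ 1 + κ * ∑ i ∈ range (k / 2), signSeq v i * signSeq w i := fun v w => by
    rw [← h_moment]
    exact sum_nonneg fun b _ =>
      div_nonneg (mul_nonneg (h_pan_nonneg v b) (h_pan_nonneg w b)) (h_unif_pos b).le
  simp only [h_moment, Fintype.card_fun, Fintype.card_bool, Fintype.card_fin, Nat.cast_pow,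
    Nat.cast_ofNat] at h_test
  exact le_natCast_of_ten_ninths_le_exp hk0 (by omega) hε0 hγ0 hκ0 hκ
    (h_test.trans (sum_sum_pow_le_exp h_nonneg))
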